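/- arXiv:0902.2821 — 3 statements merged into one kernel-verified Lean document; each statement's English description precedes it below -/
import Mathlib

section
/- For any element x of a commutative ℚ-algebra, rational a, b, and integer r ≥ 0: ∑_{s+t=r} ((−1)^t/(s! t!)) · x_a^{[s]} · x_{b−s}^{[t]} = binom(a−b+r−1, r) = (a−b)(a−b+1)⋯(a−b+r−1)/r!. -/
/-!
Write `D n z = z (z - 1) ⋯ (z - n + 1)` for the falling factorial. Put `X = x + a` and
`Y = (r - 1 - b) - x`. Since `D t (t - 1 - w) = (-1)^t D t w` and `t - 1 - (x + b - s) = Y`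
when `s + t = r`, we get `x_{b-s}^{[t]} = (-1)^t D t Y`, so the `s`-th term is
`D s X · D t Y / (s! t!)`. By the Chu–Vandermonde identity for falling factorials the sum is
`D r (X + Y) / r!`, and `X + Y = a - b + r - 1`.
-/

open Finset Polynomial

theorem descPochhammer_smeval_eq_prod_range {A : Type*} [CommRing A] (z : A) (n : ℕ) :
    (descPochhammer ℤ n).smeval z = ∏ i ∈ range n, (z - i) := by
  rw [← aeval_eq_smeval, aeval_def, eval₂_eq_eval_map, descPochhammer_map,
    descPochhammer_eval_eq_prod_range]

theorem descPochhammer_smeval_natCast_sub_one_sub {R : Type*} [Ring R] (z : R) (n : ℕ) :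
    (descPochhammer ℤ n).smeval (n - 1 - z) = (-1) ^ n * (descPochhammer ℤ n).smeval z := by
  rw [descPochhammer_smeval_eq_ascPochhammer, show (n : R) - 1 - z - n + 1 = -z by abel,
    ascPochhammer_smeval_neg_eq_descPochhammer, Units.smul_def, Int.coe_negOnePow_natCast,
    zsmul_eq_mul]
  push_cast
  rfl

theorem descPochhammer_smeval_add_natCast_sub_one {A : Type*} [CommRing A] (z : A) (n : ℕ) :
    (descPochhammer ℤ n).smeval (z + n - 1) = ∏ i ∈ range n, (z + i) := by
  rw [show z + n - 1 = n - 1 - -z by abel, descPochhammer_smeval_natCast_sub_one_sub,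
    descPochhammer_smeval_eq_prod_range]
  nth_rw 1 [← card_range n]
  rw [← prod_neg]
  simp_rw [neg_sub, sub_neg_eq_add, add_comm]

theorem descPochhammer_smeval_add_algebraMap_eq_prod_range {A : Type*} [CommRing A] [Algebra ℚ A]
    (x : A) (c : ℚ) (n : ℕ) :
    (descPochhammer ℤ n).smeval (x + algebraMap ℚ A c) =
      ∏ i ∈ range n, (x + algebraMap ℚ A (c - i)) := by
  simp_rw [descPochhammer_smeval_eq_prod_range, map_sub, map_natCast, add_sub_assoc]

theorem inv_factorial_smul_descPochhammer_smeval_add {A : Type*} [Ring A] [Module ℚ A]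
    {X Y : A} (h : Commute X Y) (r : ℕ) :
    (r.factorial : ℚ)⁻¹ • (descPochhammer ℤ r).smeval (X + Y) =
      ∑ s ∈ range (r + 1), ((s.factorial : ℚ) * (r - s).factorial)⁻¹ •
        ((descPochhammer ℤ s).smeval X * (descPochhammer ℤ (r - s)).smeval Y) := by
  rw [Ring.descPochhammer_smeval_add r h, Nat.sum_antidiagonal_eq_sum_range_succ
      (fun i j ↦ (r.choose i : A) *
        ((descPochhammer ℤ i).smeval X * (descPochhammer ℤ j).smeval Y)),
    smul_sum]
  refine sum_congr rfl fun s hs => ?_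
  have hsr : s ≤ r := Nat.lt_succ_iff.mp (mem_range.mp hs)
  rw [← nsmul_eq_mul, ← Nat.cast_smul_eq_nsmul ℚ, smul_smul, Nat.cast_choose ℚ hsr]
  congr 1
  field_simp

/-- `∑_{s+t=r} ((−1)^t/(s! t!)) x_a^{[s]} x_{b−s}^{[t]} = binom(a−b+r−1, r)`. -/
theorem sum_falling_falling_eq_choose {A : Type*} [CommRing A] [Algebra ℚ A]
    (x : A) (a b : ℚ) (r : ℕ) :
    (∑ s ∈ Finset.range (r + 1),
        (((-1 : ℚ) ^ (r - s) / ((s.factorial : ℚ) * ((r - s).factorial : ℚ))) •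
          ((∏ i ∈ Finset.range s, (x + algebraMap ℚ A (a - (i : ℚ)))) *
            ∏ i ∈ Finset.range (r - s), (x + algebraMap ℚ A (b - (s : ℚ) - (i : ℚ)))))) =
      algebraMap ℚ A ((∏ i ∈ Finset.range r, (a - b + (i : ℚ))) / (r.factorial : ℚ)) := by
  set X := x + algebraMap ℚ A a
  set Y := algebraMap ℚ A (r - 1 - b) - x
  have hXY : X + Y = algebraMap ℚ A (a - b) + r - 1 := by
    simp only [X, Y, map_sub, map_natCast, map_one]
    ring
  calc _ = ∑ s ∈ range (r + 1), ((s.factorial : ℚ) * (r - s).factorial)⁻¹ •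
          ((descPochhammer ℤ s).smeval X * (descPochhammer ℤ (r - s)).smeval Y) := by
        refine sum_congr rfl fun s hs => ?_
        have hY : Y = ((r - s : ℕ) : A) - 1 - (x + algebraMap ℚ A (b - s)) := by
          rw [Nat.cast_sub (Nat.lt_succ_iff.mp (mem_range.mp hs))]
          simp only [Y, map_sub, map_natCast, map_one]
          ring
        rw [hY, descPochhammer_smeval_natCast_sub_one_sub,
          descPochhammer_smeval_add_algebraMap_eq_prod_range,
          descPochhammer_smeval_add_algebraMap_eq_prod_range]
        simp only [Algebra.smul_def, div_eq_mul_inv, map_mul, map_pow, map_neg, map_one]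
        ring
    _ = (r.factorial : ℚ)⁻¹ • (descPochhammer ℤ r).smeval (X + Y) :=
        (inv_factorial_smul_descPochhammer_smeval_add (Commute.all X Y) r).symm
    _ = _ := by
        rw [hXY, descPochhammer_smeval_add_natCast_sub_one]
        simp only [Algebra.smul_def, div_eq_inv_mul, map_mul, map_prod, map_add, map_natCast]
end

section
/- For any integers a, k, ℓ with ℓ ≥ 0, the quantity a^ℓ · ∏_{j=0}^{ℓ−1}(k + j·a) / ℓ! is an integer. -/
/-!
It suffices that every prime power `p ^ e ∣ ℓ!` divides the product. If `p ∣ a`, then already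
`p ^ e ∣ a ^ ℓ`, because `e ≤ v_p(ℓ!) ≤ ℓ`. Otherwise `a` is invertible modulo `p ^ e`, say
`a v ≡ 1`, and `∏ (k + j a) ≡ a ^ ℓ ∏ (v k + j)`, a product of `ℓ` consecutive integers, which
`ℓ!` divides.
-/

open Finset Nat

lemma ascPochhammer_int_eval_eq_prod (c : ℤ) (n : ℕ) :
    (ascPochhammer ℤ n).eval c = ∏ j ∈ range n, (c + j) := by
  induction n with
  | zero => simp
  | succ n ih => rw [ascPochhammer_succ_eval, prod_range_succ, ih]

lemma Int.factorial_dvd_prod_range_add (c : ℤ) (n : ℕ) :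
    (n ! : ℤ) ∣ ∏ j ∈ Finset.range n, (c + j) := by
  rw [← ascPochhammer_int_eval_eq_prod, ← Polynomial.ascPochhammer_smeval_eq_eval,
    ← Ring.factorial_nsmul_multichoose_eq_ascPochhammer, nsmul_eq_mul]
  exact dvd_mul_right _ _

lemma Nat.Prime.le_of_pow_dvd_factorial {p e n : ℕ} (hp : p.Prime) (h : p ^ e ∣ n !) : e ≤ n :=
  haveI := Fact.mk hp
  ((padicValNat_dvd_iff_le (factorial_ne_zero n)).mp h).trans (padicValNat_factorial_le p n)

lemma Int.dvd_prod_range_add_mul_of_isCoprime {m a : ℤ} (k : ℤ) {n : ℕ} (hma : IsCoprime m a)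
    (hm : m ∣ n !) : m ∣ ∏ j ∈ Finset.range n, (k + j * a) := by
  obtain ⟨u, v, huv⟩ := hma
  have hfactor : ∀ j ∈ Finset.range n, k + j * a ≡ a * (v * k + j) [ZMOD m] := fun j _ =>
    Int.modEq_iff_dvd.mpr ⟨-u * k, by linear_combination k * huv⟩
  rw [← Int.modEq_zero_iff_dvd]
  calc ∏ j ∈ Finset.range n, (k + j * a)
      ≡ ∏ j ∈ Finset.range n, a * (v * k + j) [ZMOD m] := Int.ModEq.prod hfactor
    _ = a ^ n * ∏ j ∈ Finset.range n, (v * k + j) := by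
        rw [prod_mul_distrib, prod_const, card_range]
    _ ≡ 0 [ZMOD m] := Int.modEq_zero_iff_dvd.mpr
      ((hm.trans (Int.factorial_dvd_prod_range_add _ n)).mul_left _)

/-- `ℓ!` divides `a^ℓ · ∏_{j=0}^{ℓ−1}(k + j·a)`. -/
theorem factorial_dvd_pow_mul_prod (a k : ℤ) (ℓ : ℕ) :
    ((ℓ.factorial : ℤ)) ∣ a ^ ℓ * ∏ j ∈ Finset.range ℓ, (k + (j : ℤ) * a) := by
  rw [Int.natCast_dvd, Nat.dvd_iff_prime_pow_dvd_dvd]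
  intro p e hp hpe
  rw [← Int.natCast_dvd, Nat.cast_pow]
  have hpe' : ((p : ℤ) ^ e) ∣ ℓ ! := by exact_mod_cast hpe
  by_cases hpa : (p : ℤ) ∣ a
  · exact ((pow_dvd_pow _ (hp.le_of_pow_dvd_factorial hpe)).trans
      (pow_dvd_pow_of_dvd hpa ℓ)).mul_right _
  · have hcop : IsCoprime ((p : ℤ) ^ e) a :=
      ((Nat.prime_iff_prime_int.mp hp).coprime_iff_not_dvd.mpr hpa).pow_left
    exact (Int.dvd_prod_range_add_mul_of_isCoprime k hcop hpe').mul_left _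
end

section
/- Let p be prime and K a field of characteristic p. In the K-algebra generated by h, f with relations [h, f] = f² − f, h^p = h, f^p = 1 (the Radford algebra), define the coalgebra structure by Δ(f) = f ⊗ f, Δ(h) = h ⊗ f + 1 ⊗ h, ε(f)=1, ε(h)=0, S(f) = f^{−1} = f^{p−1}, S(h) = −h f^{−1}. Then these maps make the algebra a Hopf algebra; in particular, Δ is an algebra homomorphism: Δ(h)Δ(f) − Δ(f)Δ(h) = Δ(f)² − Δ(f), Δ(h)^p = Δ(h), and Δ(f)^p = 1⊗1. -/
/-!
Since `h ^ p = h`, the polynomial `X ^ p - X` kills `h`, and it vanishes on all of `𝔽_p`; hence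
every polynomial identity over `𝔽_p` that holds pointwise holds at `h`. In particular the
polynomials `e_a = 1 - (X - a) ^ (p - 1)` give complete orthogonal idempotents `e_a(h)` with
`∑ a • e_a(h) = h`, so `Δ(h) = ∑ₐ e_a(h) ⊗ (h + a f)` and `Δ(h) ^ p = ∑ₐ e_a(h) ⊗ (h + a f) ^ p`.
The commutation relation gives `(h + a) f ^ a = f ^ a (h + a f)`, so `h + a f` is conjugate to
`h + a`, whose `p`-th power is `h ^ p + a ^ p = h + a`.
-/

open Polynomial TensorProduct

namespace FiniteField

variable {F R : Type*} [Field F] [Fintype F] [Ring R] [Algebra F R] {x : R}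

theorem aeval_eq_of_forall_eval_eq (hx : x ^ Fintype.card F = x) {P Q : F[X]}
    (hPQ : ∀ a, P.eval a = Q.eval a) : aeval x P = aeval x Q := by
  set m : F[X] := X ^ Fintype.card F - X
  have hdeg : m.natDegree = Fintype.card F := X_pow_card_sub_X_natDegree_eq F Fintype.one_lt_card
  have hm : m.Monic := monic_X_pow_sub (by rw [degree_X]; exact_mod_cast Fintype.one_lt_card)
  have hvanish : (P - Q) %ₘ m = 0 := by
    refine eq_zero_of_natDegree_lt_card_of_eval_eq_zero _ Function.injective_id (fun a => ?_) ?_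
    · have := aeval_modByMonic_eq_self_of_root (p := P - Q) (q := m) (x := a)
        (by simp [m, pow_card])
      simp_all
    · refine hdeg ▸ natDegree_modByMonic_lt _ hm fun h => ?_
      simp only [h, natDegree_one] at hdeg
      exact Fintype.card_ne_zero hdeg.symm
  rw [← sub_eq_zero, ← map_sub, ← aeval_modByMonic_eq_self_of_root (q := m) (by simp [m, hx]),
    hvanish, map_zero]

noncomputable def indicatorPoly (a : F) : F[X] := 1 - (X - C a) ^ (Fintype.card F - 1)

theorem eval_indicatorPoly_self (a : F) : (indicatorPoly a).eval a = 1 := by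
  have : Fintype.card F - 1 ≠ 0 := Nat.sub_ne_zero_of_lt Fintype.one_lt_card
  simp [indicatorPoly, this]

theorem eval_indicatorPoly_of_ne {a b : F} (h : b ≠ a) : (indicatorPoly a).eval b = 0 := by
  simp [indicatorPoly, pow_card_sub_one_eq_one _ (sub_ne_zero.mpr h)]

theorem completeOrthogonalIdempotents_aeval_indicatorPoly (hx : x ^ Fintype.card F = x) :
    CompleteOrthogonalIdempotents fun a : F => aeval x (indicatorPoly a) where
  idem a := by
    rw [IsIdempotentElem, ← map_mul]
    refine aeval_eq_of_forall_eval_eq hx fun b => ?_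
    rcases eq_or_ne b a with rfl | hb
    · simp [eval_indicatorPoly_self]
    · simp [eval_indicatorPoly_of_ne hb]
  ortho a b hab := by
    dsimp only
    rw [← map_mul, ← map_zero (aeval (R := F) x)]
    refine aeval_eq_of_forall_eval_eq hx fun c => ?_
    rcases eq_or_ne c a with rfl | hc
    · simp [eval_indicatorPoly_of_ne hab]
    · simp [eval_indicatorPoly_of_ne hc]
  complete := by
    classical
    rw [← map_sum, ← map_one (aeval (R := F) x)]
    refine aeval_eq_of_forall_eval_eq hx fun b => ?_
    rw [eval_finsetSum, Finset.sum_eq_single b (fun a _ hab => eval_indicatorPoly_of_ne hab.symm)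
      (by simp), eval_indicatorPoly_self, eval_one]

theorem sum_smul_aeval_indicatorPoly (hx : x ^ Fintype.card F = x) :
    ∑ a : F, a • aeval x (indicatorPoly a) = x := by
  classical
  simp_rw [← map_smul, ← map_sum]
  conv_rhs => rw [← aeval_X (R := F) x]
  refine aeval_eq_of_forall_eval_eq hx fun b => ?_
  rw [eval_finsetSum, Finset.sum_eq_single b
    (fun a _ hab => by rw [eval_smul, eval_indicatorPoly_of_ne hab.symm, smul_zero]) (by simp),
    eval_smul, eval_indicatorPoly_self, eval_X, smul_eq_mul, mul_one]

theorem add_algebraMap_pow_card (hx : x ^ Fintype.card F = x) (a : F) :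
    (x + algebraMap F R a) ^ Fintype.card F = x + algebraMap F R a := by
  have h := aeval_eq_of_forall_eval_eq hx (P := (X + C a) ^ Fintype.card F) (Q := X + C a)
    fun b => by simp [pow_card]
  rwa [map_pow, map_add, aeval_X, aeval_C] at h

end FiniteField

theorem Finset.sum_pow_of_pairwise_mul_eq_zero {R ι : Type*} [Semiring R] {s : Finset ι}
    {v : ι → R} (hv : (s : Set ι).Pairwise fun i j => v i * v j = 0) {n : ℕ} (hn : n ≠ 0) :
    (∑ i ∈ s, v i) ^ n = ∑ i ∈ s, v i ^ n := by
  obtain ⟨n, rfl⟩ := Nat.exists_eq_succ_of_ne_zero hn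
  induction n with
  | zero => simp
  | succ n ih =>
    rw [pow_succ, ih n.succ_ne_zero, Finset.sum_mul]
    refine Finset.sum_congr rfl fun i hi => ?_
    rw [Finset.mul_sum, Finset.sum_eq_single i (fun j hj hji => by
      rw [pow_succ, mul_assoc, hv hi hj hji.symm, mul_zero]) (absurd hi), ← pow_succ]

section TensorProduct

variable {R A B : Type*} [CommSemiring R] [Semiring A] [Algebra R A] [Semiring B] [Algebra R B]
  {I : Type*} {e : I → A}

theorem OrthogonalIdempotents.sum_tmul_pow (he : OrthogonalIdempotents e) (s : Finset I)
    (y : I → B) {n : ℕ} (hn : n ≠ 0) :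
    (∑ i ∈ s, e i ⊗ₜ[R] y i) ^ n = ∑ i ∈ s, e i ⊗ₜ[R] (y i ^ n) := by
  rw [Finset.sum_pow_of_pairwise_mul_eq_zero (fun i _ j _ hij => by
    simp only [Algebra.TensorProduct.tmul_mul_tmul, he.ortho hij, zero_tmul]) hn]
  exact Finset.sum_congr rfl fun i _ => by
    rw [Algebra.TensorProduct.tmul_pow, (he.idem i).pow_eq hn]

theorem tmul_add_one_tmul_eq_sum [Fintype I] (he : ∑ i, e i = 1) (c : I → R) {x : A}
    (hx : ∑ i, c i • e i = x) (y z : B) :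
    x ⊗ₜ[R] y + 1 ⊗ₜ[R] z = ∑ i, e i ⊗ₜ[R] (z + c i • y) := by
  simp only [tmul_add, Finset.sum_add_distrib, ← sum_tmul, he, ← smul_tmul, ← hx]
  exact add_comm _ _

end TensorProduct

section Radford

variable {A : Type*} [Ring A] {h f : A}

theorem mul_pow_sub_pow_mul (r : h * f - f * h = f ^ 2 - f) (n : ℕ) :
    h * f ^ n - f ^ n * h = n * (f ^ (n + 1) - f ^ n) := by
  induction n with
  | zero => simp
  | succ n ih =>
    have hf : h * f = f ^ 2 - f + f * h := sub_eq_iff_eq_add.mp r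
    have hfn : h * f ^ n = f ^ n * h + n * (f ^ (n + 1) - f ^ n) := sub_eq_iff_eq_add'.mp ih
    rw [pow_succ, ← mul_assoc, hfn, add_mul, mul_assoc, hf]
    push_cast
    simp only [pow_succ, mul_add, mul_sub, add_mul, sub_mul, mul_assoc, one_mul]
    noncomm_ring

theorem add_natCast_mul_pow (r : h * f - f * h = f ^ 2 - f) (n : ℕ) :
    (h + n) * f ^ n = f ^ n * (h + n * f) := by
  rw [add_mul, sub_eq_iff_eq_add'.mp (mul_pow_sub_pow_mul r n), mul_add, ← mul_assoc,
    ← (Nat.cast_commute n (f ^ n)).eq, mul_assoc, ← pow_succ, mul_sub]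
  abel

theorem add_smul_pow_char {p : ℕ} [Fact p.Prime] [Algebra (ZMod p) A]
    (r1 : h * f - f * h = f ^ 2 - f) (r2 : h ^ p = h) (r3 : f ^ p = 1) (a : ZMod p) :
    (h + a • f) ^ p = h + a • f := by
  obtain ⟨n, rfl⟩ := ZMod.natCast_zmod_surjective a
  let u : Aˣ := Units.ofPowEqOne f p r3 (Fact.out : p.Prime).ne_zero ^ n
  have hshift : (h + (n : A)) ^ p = h + n := by
    have := FiniteField.add_algebraMap_pow_card (by rwa [ZMod.card]) (n : ZMod p)
    rwa [map_natCast, ZMod.card] at this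
  have hu : (u : A) = f ^ n := by simp [u]
  have hconj : h + (n : ZMod p) • f = ↑u⁻¹ * (h + n) * u := by
    rw [mul_assoc, hu, add_natCast_mul_pow r1, ← hu, Units.inv_mul_cancel_left,
      Nat.cast_smul_eq_nsmul, nsmul_eq_mul]
  rw [hconj, Units.conj_pow', hshift]

variable {K : Type*} [CommRing K] [Algebra K A]

theorem tmul_add_one_tmul_commutator (r1 : h * f - f * h = f ^ 2 - f) :
    (h ⊗ₜ[K] f + 1 ⊗ₜ[K] h) * (f ⊗ₜ[K] f) - (f ⊗ₜ[K] f) * (h ⊗ₜ[K] f + 1 ⊗ₜ[K] h)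
      = (f ⊗ₜ[K] f) ^ 2 - f ⊗ₜ[K] f := calc
  _ = (h * f - f * h) ⊗ₜ[K] (f * f) + f ⊗ₜ[K] (h * f - f * h) := by
    simp only [add_mul, mul_add, Algebra.TensorProduct.tmul_mul_tmul, one_mul, mul_one, sub_tmul,
      tmul_sub]
    abel
  _ = _ := by
    rw [r1, sq, sq, Algebra.TensorProduct.tmul_mul_tmul, sub_tmul, tmul_sub]
    abel

theorem tmul_add_one_tmul_pow_char {p : ℕ} [Fact p.Prime] [CharP K p]
    (r1 : h * f - f * h = f ^ 2 - f) (r2 : h ^ p = h) (r3 : f ^ p = 1) :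
    (h ⊗ₜ[K] f + 1 ⊗ₜ[K] h) ^ p = h ⊗ₜ[K] f + 1 ⊗ₜ[K] h := by
  -- 𝔽_p acts through K, so that its scalars move across `⊗[K]`.
  let _ : Algebra (ZMod p) A := Algebra.compHom A (ZMod.castHom dvd_rfl K)
  have hcard : h ^ Fintype.card (ZMod p) = h := by rwa [ZMod.card]
  have he := FiniteField.completeOrthogonalIdempotents_aeval_indicatorPoly hcard
  have hdecomp : h ⊗ₜ[K] f + 1 ⊗ₜ[K] h
      = ∑ a : ZMod p, aeval h (FiniteField.indicatorPoly a) ⊗ₜ[K] (h + a • f) :=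
    tmul_add_one_tmul_eq_sum he.complete (ZMod.castHom dvd_rfl K)
      (FiniteField.sum_smul_aeval_indicatorPoly hcard) f h
  rw [hdecomp, he.sum_tmul_pow _ _ (Fact.out : p.Prime).ne_zero]
  exact Finset.sum_congr rfl fun a _ => by rw [add_smul_pow_char r1 r2 r3]

end Radford

/-- The Radford algebra relations are compatible with the Hopf structure:
with `Δ(f) = f⊗f`, `Δ(h) = h⊗f + 1⊗h`, the comultiplication respects the three
defining relations, and the antipode identities hold on generators. -/
theorem radford_hopf_structure {K : Type*} [Field K] (p : ℕ) [Fact p.Prime]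
    [CharP K p] {A : Type*} [Ring A] [Algebra K A] (h f : A)
    (r1 : h * f - f * h = f ^ 2 - f) (r2 : h ^ p = h) (r3 : f ^ p = 1) :
    ((h ⊗ₜ[K] f + 1 ⊗ₜ[K] h) * (f ⊗ₜ[K] f) - (f ⊗ₜ[K] f) * (h ⊗ₜ[K] f + 1 ⊗ₜ[K] h)
        = (f ⊗ₜ[K] f) ^ 2 - (f ⊗ₜ[K] f)) ∧
    (h ⊗ₜ[K] f + 1 ⊗ₜ[K] h) ^ p = h ⊗ₜ[K] f + 1 ⊗ₜ[K] h ∧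
    (f ⊗ₜ[K] f) ^ p = 1 ∧
    f ^ (p - 1) * f = 1 ∧
    (-(h * f ^ (p - 1))) * f + h = 0 := by
  have hinv : f ^ (p - 1) * f = 1 := by
    rw [← pow_succ, Nat.sub_add_cancel (Fact.out : p.Prime).one_le, r3]
  refine ⟨tmul_add_one_tmul_commutator r1, tmul_add_one_tmul_pow_char r1 r2 r3, ?_, hinv, ?_⟩
  · rw [Algebra.TensorProduct.tmul_pow, r3, Algebra.TensorProduct.one_def]
  · rw [neg_mul, mul_assoc, hinv, mul_one, neg_add_cancel]
end
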